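/- arXiv:1903.04265 — 12 statements merged into one kernel-verified Lean document; each statement's English description precedes it below -/
import Mathlib

section
/- Let α ∈ [0,1) and set σ := (−3 + (α−4)·α + √(17 + α(16 + 2α + α³)))/(4(α−1)²). Then both ρ₁ := 2(2+α)(2 + α − 2α·σ + α²(2σ − 1)) / ((4 + 4α − 2α²)(1 + α + 2σ − 2α·σ)) and ρ₂ := (2+α)(α + 2σ − 2α·σ) / ((2 + 2α − α²)(1 + 2(α−1)σ)) are equal to (1 − α² + √(17 + α(16 + 2α + α³)))/(4 − 2(α−2)·α). -/
set_option maxHeartbeats 1000000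


theorem stmt_2 (α : ℝ) (hα0 : 0 ≤ α) (hα1 : α < 1)
    (σ : ℝ)
    (hσ : σ = (-3 + (α - 4)*α + Real.sqrt (17 + α*(16 + 2*α + α^3))) / (4*(α - 1)^2)) :
    2*(2 + α)*(2 + α - 2*α*σ + α^2*(2*σ - 1))
      / ((4 + 4*α - 2*α^2)*(1 + α + 2*σ - 2*α*σ))
      = (1 - α^2 + Real.sqrt (17 + α*(16 + 2*α + α^3))) / (4 - 2*(α - 2)*α) ∧
    (2 + α)*(α + 2*σ - 2*α*σ) / ((2 + 2*α - α^2)*(1 + 2*(α - 1)*σ))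
      = (1 - α^2 + Real.sqrt (17 + α*(16 + 2*α + α^3))) / (4 - 2*(α - 2)*α) := by
  set s : ℝ := Real.sqrt (17 + α*(16 + 2*α + α^3)) with hsdef
  have harg : (0:ℝ) ≤ 17 + α*(16 + 2*α + α^3) := by nlinarith
  have hs0 : 0 ≤ s := Real.sqrt_nonneg _
  have hs2 : s^2 = 17 + α*(16 + 2*α + α^3) := Real.sq_sqrt harg
  have hne : (α - 1) ≠ 0 := sub_ne_zero.mpr (ne_of_lt hα1)
  have h1a : 0 < 1 - α := by linarith
  have ha1 : 0 < (α - 1)^2 := by nlinarith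
  have hs_expr : s = 4*(α-1)^2*σ + 3 + 4*α - α^2 := by
    rw [hσ]; field_simp; ring
  have hQ : (4*(α-1)^2*σ + 3 + 4*α - α^2)^2 = 17 + α*(16 + 2*α + α^3) := by
    rw [← hs_expr]; exact hs2
  have hc1 : (0:ℝ) < 3 + 4*α - α^2 := by nlinarith
  have hgt : 3 + 4*α - α^2 < s := by
    nlinarith [hs2, mul_pos (mul_pos h1a h1a) (by nlinarith : (0:ℝ) < 1 + α),
      mul_nonneg hs0 hc1.le]
  have hσpos : 0 < σ := by
    rw [hσ]
    apply div_pos (by nlinarith) (by positivity)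
  have hD1 : 0 < 1 + α + 2*σ - 2*α*σ := by
    nlinarith [mul_pos hσpos h1a]
  have hslt : s < 5 + 2*α - α^2 := by
    nlinarith [hs2, mul_pos (mul_pos h1a h1a) (by nlinarith : (0:ℝ) < 2 + α),
      mul_nonneg hs0 (by nlinarith : (0:ℝ) ≤ 5 + 2*α - α^2)]
  have hD2 : 0 < 1 + 2*(α - 1)*σ := by
    have key : (1 + 2*(α-1)*σ) * (4*(α-1)^2)
        = 4*(α-1)^2 + 2*(α-1)*(s - 3 - 4*α + α^2) := by
      rw [hs_expr]; ring
    have hR : 0 < 4*(α-1)^2 + 2*(α-1)*(s - 3 - 4*α + α^2) := by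
      nlinarith [mul_pos h1a (by linarith : (0:ℝ) < 5 + 2*α - α^2 - s)]
    have hDq : (0:ℝ) < 4*(α-1)^2 := by positivity
    by_contra h
    push_neg at h
    have hle : (1 + 2*(α-1)*σ) * (4*(α-1)^2) ≤ 0 :=
      mul_nonpos_of_nonpos_of_nonneg h hDq.le
    rw [key] at hle
    linarith
  have hd3 : (0:ℝ) < 2 + 2*α - α^2 := by nlinarith
  have hd4 : (0:ℝ) < 4 - 2*(α - 2)*α := by nlinarith
  have hd5 : (0:ℝ) < 4 + 4*α - 2*α^2 := by nlinarith
  have h2a : (2:ℝ)*(α-1) ≠ 0 := by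
    intro h; apply hne; linarith [mul_left_cancel₀ (two_ne_zero (α := ℝ)) (h.trans (mul_zero 2).symm)]
  constructor
  · rw [div_eq_div_iff (ne_of_gt (mul_pos hd5 hD1)) (ne_of_gt hd4)]
    apply mul_right_cancel₀ h2a
    rw [hs_expr]
    linear_combination (4 + 4*α - 2*α^2) * hQ
  · rw [div_eq_div_iff (ne_of_gt (mul_pos hd3 hD2)) (ne_of_gt hd4)]
    apply mul_right_cancel₀ h2a
    rw [hs_expr]
    linear_combination (α^2 - 2*α - 2) * hQ
end

section
/- For every α ∈ [0,1], (1 − α² + √(17 + α(16 + 2α + α³)))/(4 − 2(α−2)·α) ≤ (1 + √17)/4. -/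
theorem stmt_3 (α : ℝ) (hα0 : 0 ≤ α) (hα1 : α ≤ 1) :
    (1 - α^2 + Real.sqrt (17 + α*(16 + 2*α + α^3))) / (4 - 2*(α - 2)*α)
      ≤ (1 + Real.sqrt 17) / 4 := by
  have hs : Real.sqrt 17 ^ 2 = 17 := Real.sq_sqrt (by norm_num)
  have hs4 : (4:ℝ) ≤ Real.sqrt 17 := by
    nlinarith [Real.sqrt_nonneg 17, hs]
  have hden : 0 < 4 - 2*(α - 2)*α := by nlinarith
  have hRHS : 0 ≤ ((4*α + 2*α^2) + Real.sqrt 17 * (4 + 4*α - 2*α^2)) / 4 := by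
    nlinarith [Real.sqrt_nonneg 17]
  have h1 : 17 + α*(16 + 2*α + α^3)
      ≤ (((4*α + 2*α^2) + Real.sqrt 17 * (4 + 4*α - 2*α^2)) / 4)^2 := by
    have hg : 0 ≤ 4*α + 2*α^2 := by nlinarith
    have hh : 0 ≤ 4 + 4*α - 2*α^2 := by nlinarith
    have hs2 : Real.sqrt 17 ^ 2 * (4 + 4*α - 2*α^2)^2 = 17 * (4 + 4*α - 2*α^2)^2 := by
      rw [hs]
    have h0 : 16*(17 + α*(16 + 2*α + α^3))
        ≤ ((4*α + 2*α^2) + Real.sqrt 17 * (4 + 4*α - 2*α^2))^2 := by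
      nlinarith [hs2, mul_nonneg (mul_nonneg (by linarith : (0:ℝ) ≤ Real.sqrt 17 - 4) hg) hh,
        mul_nonneg (mul_nonneg hα0 (by nlinarith : (0:ℝ) ≤ 52 + 22*α - 32*α^2 + 3*α^3)) hα0]
    rw [div_pow]
    linarith
  have key : Real.sqrt (17 + α*(16 + 2*α + α^3))
      ≤ ((4*α + 2*α^2) + Real.sqrt 17 * (4 + 4*α - 2*α^2)) / 4 := by
    have h2 := Real.sqrt_le_sqrt h1
    rwa [Real.sqrt_sq hRHS] at h2
  rw [div_le_div_iff₀ hden (by norm_num)]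
  nlinarith [key, Real.sqrt_nonneg 17]
end

section
/- Let x = (x₁, x₂, x₃) with x₁ = (√17 − 3)/4, x₂ = 1/2, x₃ = (7 − √17)/4. Then for every i ∈ {1,2,3} and every t ∈ [0,1], the utility of facility i in the placement obtained from x by replacing x_i with t is at most ((1 + √17)/4) · u_i(x); i.e., x is a ((1+√17)/4)-approximate pure subgame perfect equilibrium of the three-facility Hotelling game with α = 0. -/
open MeasureTheory Set

/-- Utility of facility `i` in the three-facility Hotelling game with `α = 0`:
the Lebesgue measure of the set of clients in `[0,1]` for which facility `i` is
(weakly) nearest, divided by the number of facilities co-located with `i`. -/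
noncomputable def hotellingUtility (x : Fin 3 → ℝ) (i : Fin 3) : ℝ :=
  (MeasureTheory.volume
      {z : ℝ | z ∈ Set.Icc (0:ℝ) 1 ∧ ∀ j : Fin 3, |z - x i| ≤ |z - x j|}).toReal
    / (Finset.univ.filter (fun j : Fin 3 => x j = x i)).card

private lemma absL {p q z : ℝ} (hpq : p < q) (h : |z - p| ≤ |z - q|) : z ≤ (p + q) / 2 := by
  rcases abs_cases (z - p) with ⟨e1, f1⟩ | ⟨e1, f1⟩ <;>
  rcases abs_cases (z - q) with ⟨e2, f2⟩ | ⟨e2, f2⟩ <;>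
  rw [e1, e2] at h <;> linarith

private lemma absR {p q z : ℝ} (hpq : p < q) (h : |z - q| ≤ |z - p|) : (p + q) / 2 ≤ z := by
  rcases abs_cases (z - p) with ⟨e1, f1⟩ | ⟨e1, f1⟩ <;>
  rcases abs_cases (z - q) with ⟨e2, f2⟩ | ⟨e2, f2⟩ <;>
  rw [e1, e2] at h <;> linarith

private lemma absL' {p q z : ℝ} (hpq : p ≤ q) (h : z ≤ (p + q) / 2) : |z - p| ≤ |z - q| := by
  rcases abs_cases (z - p) with ⟨e1, f1⟩ | ⟨e1, f1⟩ <;>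
  rcases abs_cases (z - q) with ⟨e2, f2⟩ | ⟨e2, f2⟩ <;>
  rw [e1, e2] <;> linarith

private lemma absR' {p q z : ℝ} (hpq : p ≤ q) (h : (p + q) / 2 ≤ z) : |z - q| ≤ |z - p| := by
  rcases abs_cases (z - p) with ⟨e1, f1⟩ | ⟨e1, f1⟩ <;>
  rcases abs_cases (z - q) with ⟨e2, f2⟩ | ⟨e2, f2⟩ <;>
  rw [e1, e2] <;> linarith

private lemma forall_fin3 {P : Fin 3 → Prop} (hh0 : P 0) (hh1 : P 1) (hh2 : P 2) :
    ∀ j : Fin 3, P j := by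
  intro j
  fin_cases j <;> first | exact hh0 | exact hh1 | exact hh2

private lemma hU_le (y : Fin 3 → ℝ) (i : Fin 3) {l u : ℝ} (hlu : l ≤ u)
    (h : ∀ z : ℝ, z ∈ Set.Icc (0:ℝ) 1 → (∀ j : Fin 3, |z - y i| ≤ |z - y j|) → l ≤ z ∧ z ≤ u) :
    hotellingUtility y i ≤ u - l := by
  have hsub : {z : ℝ | z ∈ Set.Icc (0:ℝ) 1 ∧ ∀ j : Fin 3, |z - y i| ≤ |z - y j|}
      ⊆ Set.Icc l u := by
    rintro z ⟨hz1, hz2⟩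
    exact ⟨(h z hz1 hz2).1, (h z hz1 hz2).2⟩
  have hm := measure_mono (μ := volume) hsub
  rw [Real.volume_Icc] at hm
  have h1 : (volume {z : ℝ | z ∈ Set.Icc (0:ℝ) 1 ∧
      ∀ j : Fin 3, |z - y i| ≤ |z - y j|}).toReal ≤ u - l := by
    have h2 := ENNReal.toReal_mono ENNReal.ofReal_ne_top hm
    rwa [ENNReal.toReal_ofReal (by linarith)] at h2
  have hcard : (1:ℝ) ≤ ((Finset.univ.filter (fun j : Fin 3 => y j = y i)).card : ℝ) := by
    have hmem : i ∈ Finset.univ.filter (fun j : Fin 3 => y j = y i) := by simp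
    exact_mod_cast Finset.card_pos.mpr ⟨i, hmem⟩
  unfold hotellingUtility
  exact le_trans (div_le_self ENNReal.toReal_nonneg hcard) h1

private lemma hU_le_half (y : Fin 3 → ℝ) (i j : Fin 3) (hij : j ≠ i) (hyj : y j = y i)
    {l u : ℝ} (hlu : l ≤ u)
    (h : ∀ z : ℝ, z ∈ Set.Icc (0:ℝ) 1 → (∀ k : Fin 3, |z - y i| ≤ |z - y k|) → l ≤ z ∧ z ≤ u) :
    hotellingUtility y i ≤ (u - l) / 2 := by
  have hsub : {z : ℝ | z ∈ Set.Icc (0:ℝ) 1 ∧ ∀ k : Fin 3, |z - y i| ≤ |z - y k|}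
      ⊆ Set.Icc l u := by
    rintro z ⟨hz1, hz2⟩
    exact ⟨(h z hz1 hz2).1, (h z hz1 hz2).2⟩
  have hm := measure_mono (μ := volume) hsub
  rw [Real.volume_Icc] at hm
  have h1 : (volume {z : ℝ | z ∈ Set.Icc (0:ℝ) 1 ∧
      ∀ k : Fin 3, |z - y i| ≤ |z - y k|}).toReal ≤ u - l := by
    have h2 := ENNReal.toReal_mono ENNReal.ofReal_ne_top hm
    rwa [ENNReal.toReal_ofReal (by linarith)] at h2
  have hcard : (2:ℝ) ≤ ((Finset.univ.filter (fun k : Fin 3 => y k = y i)).card : ℝ) := by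
    have hss : ({j, i} : Finset (Fin 3)) ⊆ Finset.univ.filter (fun k : Fin 3 => y k = y i) := by
      intro k hk
      simp only [Finset.mem_insert, Finset.mem_singleton] at hk
      rcases hk with rfl | rfl <;> simp [hyj]
    have hc := Finset.card_le_card hss
    rw [Finset.card_pair hij] at hc
    exact_mod_cast hc
  unfold hotellingUtility
  exact div_le_div₀ (by linarith) h1 (by norm_num) hcard

private lemma hU_ge (y : Fin 3 → ℝ) (i : Fin 3) {l u : ℝ} (hlu : l ≤ u)
    (hcard : Finset.univ.filter (fun j : Fin 3 => y j = y i) = {i})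
    (h : ∀ z : ℝ, l ≤ z → z ≤ u →
      z ∈ Set.Icc (0:ℝ) 1 ∧ ∀ j : Fin 3, |z - y i| ≤ |z - y j|) :
    u - l ≤ hotellingUtility y i := by
  unfold hotellingUtility
  rw [hcard]
  simp only [Finset.card_singleton, Nat.cast_one, div_one]
  have hsub : Set.Icc l u ⊆
      {z : ℝ | z ∈ Set.Icc (0:ℝ) 1 ∧ ∀ j : Fin 3, |z - y i| ≤ |z - y j|} :=
    fun z hz => h z hz.1 hz.2
  have h1 := measure_mono (μ := volume) hsub
  have h2 : volume {z : ℝ | z ∈ Set.Icc (0:ℝ) 1 ∧ ∀ j : Fin 3, |z - y i| ≤ |z - y j|}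
      ≤ volume (Set.Icc (0:ℝ) 1) := measure_mono (fun z hz => hz.1)
  have hfin : volume {z : ℝ | z ∈ Set.Icc (0:ℝ) 1 ∧ ∀ j : Fin 3, |z - y i| ≤ |z - y j|} ≠ ⊤ := by
    rw [Real.volume_Icc] at h2
    exact ne_top_of_le_ne_top ENNReal.ofReal_ne_top h2
  have h3 := ENNReal.toReal_mono hfin h1
  rwa [Real.volume_Icc, ENNReal.toReal_ofReal (by linarith)] at h3

set_option maxHeartbeats 1000000 in
theorem stmt_4 (x : Fin 3 → ℝ)
    (hx : x = ![(Real.sqrt 17 - 3) / 4, 1/2, (7 - Real.sqrt 17) / 4]) :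
    ∀ i : Fin 3, ∀ t ∈ Set.Icc (0:ℝ) 1,
      hotellingUtility (Function.update x i t) i
        ≤ ((1 + Real.sqrt 17) / 4) * hotellingUtility x i := by
  set s := Real.sqrt 17 with hsdef
  have hs0 : 0 ≤ s := Real.sqrt_nonneg 17
  have hs2 : s ^ 2 = 17 := Real.sq_sqrt (by norm_num)
  have hs4 : 4 < s := by nlinarith
  have hs5 : s < 5 := by nlinarith
  have h0 : x 0 = (s - 3) / 4 := by rw [hx]; rfl
  have h1 : x 1 = 1 / 2 := by rw [hx]; rfl
  have h2 : x 2 = (7 - s) / 4 := by rw [hx]; rfl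
  intro i t ht
  obtain ⟨ht0, ht1⟩ := ht
  fin_cases i
  · -- i = 0
    show hotellingUtility (Function.update x 0 t) 0 ≤ ((1 + s) / 4) * hotellingUtility x 0
    have hne10 : x 1 ≠ x 0 := by rw [h0, h1]; intro hh; linarith
    have hne20 : x 2 ≠ x 0 := by rw [h0, h2]; intro hh; linarith
    have hcard0 : Finset.univ.filter (fun j : Fin 3 => x j = x 0) = {0} := by
      apply Finset.ext
      intro j
      fin_cases j <;> simp [hne10, hne20]
    have hu0 : (s - 1) / 8 - 0 ≤ hotellingUtility x 0 := by
      apply hU_ge x 0 (by linarith) hcard0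
      intro z hzl hzr
      refine ⟨⟨by linarith, by linarith⟩, forall_fin3 (le_refl _) ?_ ?_⟩
      · rw [h0, h1]; exact absL' (by linarith) (by linarith)
      · rw [h0, h2]; exact absL' (by linarith) (by linarith)
    have hRHS : (1:ℝ) / 2 ≤ ((1 + s) / 4) * hotellingUtility x 0 := by
      have hmul := mul_le_mul_of_nonneg_left hu0 (show (0:ℝ) ≤ (1 + s) / 4 by linarith)
      nlinarith [hmul]
    rcases lt_trichotomy t (1/2 : ℝ) with hlt | heq | hgt
    · have hle : hotellingUtility (Function.update x 0 t) 0 ≤ (t + 1/2) / 2 - 0 := by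
        apply hU_le _ _ (by linarith)
        intro z hz hzj
        have hj := hzj 1
        rw [Function.update_self, Function.update_of_ne (by decide), h1] at hj
        exact ⟨hz.1, by linarith [absL hlt hj]⟩
      linarith
    · have hle : hotellingUtility (Function.update x 0 t) 0 ≤ (1 - 0) / 2 := by
        apply hU_le_half _ _ 1 (by decide)
          (by rw [Function.update_of_ne (by decide), Function.update_self, h1, heq])
          (by norm_num)
        intro z hz _
        exact ⟨hz.1, hz.2⟩
      linarith
    · have hle : hotellingUtility (Function.update x 0 t) 0 ≤ 1 - (1/2 + t) / 2 := by
        apply hU_le _ _ (by linarith)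
        intro z hz hzj
        have hj := hzj 1
        rw [Function.update_self, Function.update_of_ne (by decide), h1] at hj
        exact ⟨by linarith [absR hgt hj], hz.2⟩
      linarith
  · -- i = 1
    show hotellingUtility (Function.update x 1 t) 1 ≤ ((1 + s) / 4) * hotellingUtility x 1
    have hne01 : x 0 ≠ x 1 := by rw [h0, h1]; intro hh; linarith
    have hne21 : x 2 ≠ x 1 := by rw [h1, h2]; intro hh; linarith
    have hcard1 : Finset.univ.filter (fun j : Fin 3 => x j = x 1) = {1} := by
      apply Finset.ext
      intro j
      fin_cases j <;> simp [hne01, hne21]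
    have hu1 : (9 - s) / 8 - (s - 1) / 8 ≤ hotellingUtility x 1 := by
      apply hU_ge x 1 (by linarith) hcard1
      intro z hzl hzr
      refine ⟨⟨by linarith, by linarith⟩, forall_fin3 ?_ (le_refl _) ?_⟩
      · rw [h0, h1]; exact absR' (by linarith) (by linarith)
      · rw [h1, h2]; exact absL' (by linarith) (by linarith)
    have hRHS : (s - 3) / 4 ≤ ((1 + s) / 4) * hotellingUtility x 1 := by
      have hmul := mul_le_mul_of_nonneg_left hu1 (show (0:ℝ) ≤ (1 + s) / 4 by linarith)
      nlinarith [hmul]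
    rcases lt_trichotomy t ((s - 3) / 4) with hlt | heq | hgt
    · have hle : hotellingUtility (Function.update x 1 t) 1 ≤ (t + (s - 3) / 4) / 2 - 0 := by
        apply hU_le _ _ (by linarith)
        intro z hz hzj
        have hj := hzj 0
        rw [Function.update_self, Function.update_of_ne (by decide), h0] at hj
        exact ⟨hz.1, by linarith [absL hlt hj]⟩
      linarith
    · have hle : hotellingUtility (Function.update x 1 t) 1 ≤ (1/2 - 0) / 2 := by
        apply hU_le_half _ _ 0 (by decide)
          (by rw [Function.update_of_ne (by decide), Function.update_self, h0, heq])
          (by norm_num)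
        intro z hz hzj
        have hj := hzj 2
        rw [Function.update_self, Function.update_of_ne (by decide), h2] at hj
        have hzle := absL (by linarith) hj
        exact ⟨hz.1, by linarith⟩
      linarith
    · rcases lt_trichotomy t ((7 - s) / 4) with hlt' | heq' | hgt'
      · have hle : hotellingUtility (Function.update x 1 t) 1
            ≤ (t + (7 - s) / 4) / 2 - ((s - 3) / 4 + t) / 2 := by
          apply hU_le _ _ (by linarith)
          intro z hz hzj
          have hj0 := hzj 0
          have hj2 := hzj 2
          rw [Function.update_self, Function.update_of_ne (by decide), h0] at hj0
          rw [Function.update_self, Function.update_of_ne (by decide), h2] at hj2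
          exact ⟨by linarith [absR hgt hj0], by linarith [absL hlt' hj2]⟩
        linarith
      · have hle : hotellingUtility (Function.update x 1 t) 1 ≤ (1 - 1/2) / 2 := by
          apply hU_le_half _ _ 2 (by decide)
            (by rw [Function.update_of_ne (by decide), Function.update_self, h2, heq'])
            (by norm_num)
          intro z hz hzj
          have hj := hzj 0
          rw [Function.update_self, Function.update_of_ne (by decide), h0] at hj
          have hzge := absR (by linarith) hj
          exact ⟨by linarith, hz.2⟩
        linarith
      · have hle : hotellingUtility (Function.update x 1 t) 1
            ≤ 1 - ((7 - s) / 4 + t) / 2 := by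
          apply hU_le _ _ (by linarith)
          intro z hz hzj
          have hj := hzj 2
          rw [Function.update_self, Function.update_of_ne (by decide), h2] at hj
          exact ⟨by linarith [absR hgt' hj], hz.2⟩
        linarith
  · -- i = 2
    show hotellingUtility (Function.update x 2 t) 2 ≤ ((1 + s) / 4) * hotellingUtility x 2
    have hne02 : x 0 ≠ x 2 := by rw [h0, h2]; intro hh; linarith
    have hne12 : x 1 ≠ x 2 := by rw [h1, h2]; intro hh; linarith
    have hcard2 : Finset.univ.filter (fun j : Fin 3 => x j = x 2) = {2} := by
      apply Finset.ext
      intro j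
      fin_cases j <;> simp [hne02, hne12]
    have hu2 : 1 - (9 - s) / 8 ≤ hotellingUtility x 2 := by
      apply hU_ge x 2 (by linarith) hcard2
      intro z hzl hzr
      refine ⟨⟨by linarith, by linarith⟩, forall_fin3 ?_ ?_ (le_refl _)⟩
      · rw [h0, h2]; exact absR' (by linarith) (by linarith)
      · rw [h1, h2]; exact absR' (by linarith) (by linarith)
    have hRHS : (1:ℝ) / 2 ≤ ((1 + s) / 4) * hotellingUtility x 2 := by
      have hmul := mul_le_mul_of_nonneg_left hu2 (show (0:ℝ) ≤ (1 + s) / 4 by linarith)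
      nlinarith [hmul]
    rcases lt_trichotomy t (1/2 : ℝ) with hlt | heq | hgt
    · have hle : hotellingUtility (Function.update x 2 t) 2 ≤ (t + 1/2) / 2 - 0 := by
        apply hU_le _ _ (by linarith)
        intro z hz hzj
        have hj := hzj 1
        rw [Function.update_self, Function.update_of_ne (by decide), h1] at hj
        exact ⟨hz.1, by linarith [absL hlt hj]⟩
      linarith
    · have hle : hotellingUtility (Function.update x 2 t) 2 ≤ (1 - 0) / 2 := by
        apply hU_le_half _ _ 1 (by decide)
          (by rw [Function.update_of_ne (by decide), Function.update_self, h1, heq])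
          (by norm_num)
        intro z hz _
        exact ⟨hz.1, hz.2⟩
      linarith
    · have hle : hotellingUtility (Function.update x 2 t) 2 ≤ 1 - (1/2 + t) / 2 := by
        apply hU_le _ _ (by linarith)
        intro z hz hzj
        have hj := hzj 1
        rw [Function.update_self, Function.update_of_ne (by decide), h1] at hj
        exact ⟨by linarith [absR hgt hj], hz.2⟩
      linarith
end

section
/- For every placement (x₁, x₂, x₃) ∈ [0,1]³ and every real ρ < (1 + √17)/4, there exist i ∈ {1,2,3} and t ∈ [0,1] such that the utility of facility i in the placement obtained by replacing x_i with t is strictly greater than ρ · u_i(x₁, x₂, x₃); i.e., the three-facility Hotelling game with α = 0 has no ρ-approximate pure subgame perfect equilibrium with ρ < (1+√17)/4. -/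
open MeasureTheory Set Function

lemma near_of_le {u v z : ℝ} (huv : u ≤ v) (hz : z ≤ (u+v)/2) : |z - u| ≤ |z - v| := by
  have h1 : |z - v| = v - z := by rw [abs_sub_comm, abs_of_nonneg (by linarith)]
  rw [h1, abs_le]; constructor <;> linarith

lemma near_of_ge {u v z : ℝ} (huv : u ≤ v) (hz : (u+v)/2 ≤ z) : |z - v| ≤ |z - u| := by
  have h1 : |z - u| = z - u := abs_of_nonneg (by linarith)
  rw [h1, abs_le]; constructor <;> linarith

lemma le_of_near {u v z : ℝ} (huv : u < v) (h : |z - u| ≤ |z - v|) : z ≤ (u+v)/2 := by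
  have h2 : (z-u)^2 ≤ (z-v)^2 := by
    have := pow_le_pow_left₀ (abs_nonneg (z-u)) h 2
    rwa [sq_abs, sq_abs] at this
  nlinarith

lemma ge_of_near {u v z : ℝ} (huv : u < v) (h : |z - v| ≤ |z - u|) : (u+v)/2 ≤ z := by
  have h2 : (z-v)^2 ≤ (z-u)^2 := by
    have := pow_le_pow_left₀ (abs_nonneg (z-v)) h 2
    rwa [sq_abs, sq_abs] at this
  nlinarith

lemma fin3_cover : ∀ (i j k l : Fin 3), i ≠ j → i ≠ k → j ≠ k → l = i ∨ l = j ∨ l = k := by decide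

lemma utility_nonneg (x : Fin 3 → ℝ) (i : Fin 3) : 0 ≤ hotellingUtility x i :=
  div_nonneg ENNReal.toReal_nonneg (Nat.cast_nonneg _)

/-- upper bound on utility when the near-region is inside `Icc p q`, card ≥ n version -/
lemma vol_toReal_le (S : Set ℝ) {p q : ℝ} (hpq : p ≤ q) (h : S ⊆ Icc p q) :
    (volume S).toReal ≤ q - p := by
  have h1 : volume S ≤ ENNReal.ofReal (q - p) := by
    rw [← Real.volume_Icc]; exact measure_mono h
  calc (volume S).toReal ≤ (ENNReal.ofReal (q - p)).toReal :=
        ENNReal.toReal_mono ENNReal.ofReal_ne_top h1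
    _ = q - p := ENNReal.toReal_ofReal (by linarith)

lemma vol_toReal_ge (S : Set ℝ) {p q : ℝ} (h : Icc p q ⊆ S) (h' : S ⊆ Icc 0 1) :
    q - p ≤ (volume S).toReal := by
  rcases le_or_gt q p with hqp | hqp
  · have := ENNReal.toReal_nonneg (a := volume S); linarith
  · have hne : volume S ≠ ⊤ := by
      have h1 : volume S ≤ ENNReal.ofReal (1 - 0) := by
        rw [← Real.volume_Icc]; exact measure_mono h'
      exact ne_top_of_le_ne_top ENNReal.ofReal_ne_top h1
    have h2 : ENNReal.ofReal (q - p) ≤ volume S := by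
      rw [← Real.volume_Icc]; exact measure_mono h
    calc q - p = (ENNReal.ofReal (q - p)).toReal := (ENNReal.toReal_ofReal (by linarith)).symm
      _ ≤ (volume S).toReal := ENNReal.toReal_mono hne h2

lemma utility_le (x : Fin 3 → ℝ) (i : Fin 3) {p q : ℝ} (hpq : p ≤ q)
    (h : ∀ z : ℝ, z ∈ Set.Icc (0:ℝ) 1 → (∀ j : Fin 3, |z - x i| ≤ |z - x j|) → z ∈ Icc p q) :
    hotellingUtility x i ≤ q - p := by
  have hsub : {z : ℝ | z ∈ Set.Icc (0:ℝ) 1 ∧ ∀ j : Fin 3, |z - x i| ≤ |z - x j|} ⊆ Icc p q :=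
    fun z hz => h z hz.1 hz.2
  have hv := vol_toReal_le _ hpq hsub
  have hcard : (1:ℝ) ≤ ((Finset.univ.filter (fun j : Fin 3 => x j = x i)).card : ℝ) := by
    have hi : i ∈ Finset.univ.filter (fun j : Fin 3 => x j = x i) := by simp
    exact_mod_cast Finset.card_pos.mpr ⟨i, hi⟩
  calc hotellingUtility x i
      ≤ (volume {z : ℝ | z ∈ Set.Icc (0:ℝ) 1 ∧ ∀ j : Fin 3, |z - x i| ≤ |z - x j|}).toReal := by
        unfold hotellingUtility
        apply div_le_self ENNReal.toReal_nonneg hcard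
    _ ≤ q - p := hv

lemma utility_le_half (x : Fin 3 → ℝ) (i j : Fin 3) (hij : j ≠ i) (hxj : x j = x i)
    {p q : ℝ} (hpq : p ≤ q)
    (h : ∀ z : ℝ, z ∈ Set.Icc (0:ℝ) 1 → (∀ j : Fin 3, |z - x i| ≤ |z - x j|) → z ∈ Icc p q) :
    hotellingUtility x i ≤ (q - p)/2 := by
  have hsub : {z : ℝ | z ∈ Set.Icc (0:ℝ) 1 ∧ ∀ j : Fin 3, |z - x i| ≤ |z - x j|} ⊆ Icc p q :=
    fun z hz => h z hz.1 hz.2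
  have hv := vol_toReal_le _ hpq hsub
  have hcard : (2:ℝ) ≤ ((Finset.univ.filter (fun j : Fin 3 => x j = x i)).card : ℝ) := by
    have hsub2 : ({i, j} : Finset (Fin 3)) ⊆ Finset.univ.filter (fun j : Fin 3 => x j = x i) := by
      intro l hl
      simp only [Finset.mem_insert, Finset.mem_singleton] at hl
      rcases hl with rfl | rfl <;> simp [hxj]
    have h2 : ({i, j} : Finset (Fin 3)).card = 2 := by
      rw [Finset.card_insert_of_notMem (by simp [hij.symm]), Finset.card_singleton]
    have := Finset.card_le_card hsub2
    rw [h2] at this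
    exact_mod_cast this
  unfold hotellingUtility
  apply div_le_div₀ (by linarith) hv two_pos hcard

lemma utility_le_third (x : Fin 3 → ℝ) (i : Fin 3) (hall : ∀ l, x l = x i) :
    hotellingUtility x i ≤ 1/3 := by
  have hv := vol_toReal_le {z : ℝ | z ∈ Set.Icc (0:ℝ) 1 ∧ ∀ j : Fin 3, |z - x i| ≤ |z - x j|}
    (p := 0) (q := 1) (by norm_num) (fun z hz => hz.1)
  have hcard : Finset.univ.filter (fun j : Fin 3 => x j = x i) = Finset.univ := by
    apply Finset.filter_true_of_mem; intro l _; exact hall l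
  unfold hotellingUtility
  rw [hcard]
  simp only [Finset.card_univ, Fintype.card_fin]
  rw [div_le_div_iff₀ (by norm_num) (by norm_num)]
  push_cast
  linarith

lemma utility_ge (x : Fin 3 → ℝ) (i : Fin 3) {p q : ℝ} (hp : 0 ≤ p) (hq : q ≤ 1)
    (hcard : ∀ j, x j = x i → j = i)
    (h : ∀ z ∈ Icc p q, ∀ j : Fin 3, |z - x i| ≤ |z - x j|) :
    q - p ≤ hotellingUtility x i := by
  rcases le_or_gt q p with hqp | hqp
  · have := utility_nonneg x i; linarith
  · have hsub : Icc p q ⊆ {z : ℝ | z ∈ Set.Icc (0:ℝ) 1 ∧ ∀ j : Fin 3, |z - x i| ≤ |z - x j|} := by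
      intro z hz
      exact ⟨⟨le_trans hp hz.1, le_trans hz.2 hq⟩, h z hz⟩
    have hv := vol_toReal_ge _ hsub (fun z hz => hz.1)
    have hfil : Finset.univ.filter (fun j : Fin 3 => x j = x i) = {i} := by
      ext l
      simp only [Finset.mem_filter, Finset.mem_univ, true_and, Finset.mem_singleton]
      exact ⟨fun h' => hcard l h', fun h' => h' ▸ rfl⟩
    unfold hotellingUtility
    rw [hfil]
    simpa using hv

/-- Workhorse: a deviation of facility `i` to `t` whose near-region contains `Icc p q`
    yields, under the no-good-deviation hypothesis, `q - p ≤ ρ * u_i`. -/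
lemma dev_lower (x : Fin 3 → ℝ) (ρ : ℝ) (i j k : Fin 3)
    (hij : i ≠ j) (hik : i ≠ k) (hjk : j ≠ k)
    (H : ∀ t ∈ Set.Icc (0:ℝ) 1,
      hotellingUtility (Function.update x i t) i ≤ ρ * hotellingUtility x i)
    {t p q : ℝ} (ht : t ∈ Set.Icc (0:ℝ) 1) (hp : 0 ≤ p) (hq : q ≤ 1)
    (htj : t ≠ x j) (htk : t ≠ x k)
    (hmem : ∀ z ∈ Icc p q, |z - t| ≤ |z - x j| ∧ |z - t| ≤ |z - x k|) :
    q - p ≤ ρ * hotellingUtility x i := by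
  refine le_trans ?_ (H t ht)
  apply utility_ge _ _ hp hq
  · intro l hl
    rcases fin3_cover i j k l hij hik hjk with rfl | rfl | rfl
    · rfl
    · rw [Function.update_self] at hl
      rw [Function.update_of_ne (Ne.symm hij)] at hl
      exact absurd hl.symm htj
    · rw [Function.update_self] at hl
      rw [Function.update_of_ne (Ne.symm hik)] at hl
      exact absurd hl.symm htk
  · intro z hz l
    rw [Function.update_self]
    rcases fin3_cover i j k l hij hik hjk with rfl | rfl | rfl
    · rw [Function.update_self]
    · rw [Function.update_of_ne (Ne.symm hij)]; exact (hmem z hz).1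
    · rw [Function.update_of_ne (Ne.symm hik)]; exact (hmem z hz).2

/-- Deviating to just below the smaller competitor `x j`. -/
lemma dev_left (x : Fin 3 → ℝ) (ρ : ℝ) (i j k : Fin 3)
    (hij : i ≠ j) (hik : i ≠ k) (hjk : j ≠ k)
    (hx : ∀ l, x l ∈ Set.Icc (0:ℝ) 1) (hord : x j ≤ x k) (hρ : 0 ≤ ρ)
    (H : ∀ t ∈ Set.Icc (0:ℝ) 1,
      hotellingUtility (Function.update x i t) i ≤ ρ * hotellingUtility x i) :
    x j ≤ ρ * hotellingUtility x i := by
  rcases le_or_gt (x j) 0 with h0 | h0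
  · exact h0.trans (mul_nonneg hρ (utility_nonneg x i))
  · apply le_of_forall_pos_le_add
    intro ε hε
    set δ := min ε (x j) with hδdef
    have hδ0 : 0 < δ := lt_min hε h0
    have hδj : δ ≤ x j := min_le_right _ _
    have hδε : δ ≤ ε := min_le_left _ _
    set t := x j - δ with htdef
    have ht : t ∈ Set.Icc (0:ℝ) 1 := ⟨by simp only [htdef]; linarith,
      by have := (hx j).2; simp only [htdef]; linarith⟩
    have hkey : (t + x j)/2 - 0 ≤ ρ * hotellingUtility x i := by
      apply dev_lower x ρ i j k hij hik hjk H ht le_rfl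
      · have := (hx j).2; simp only [htdef]; linarith
      · simp only [htdef]; intro hc; nlinarith [hc]
      · simp only [htdef]; intro hc; nlinarith [hord]
      · intro z hz
        constructor
        · exact near_of_le (by simp only [htdef]; linarith) hz.2
        · exact near_of_le (by simp only [htdef]; linarith)
            (by have : (t + x j)/2 ≤ (t + x k)/2 := by linarith
                linarith [hz.2])
    have : x j = (t + x j)/2 - 0 + δ/2 := by simp only [htdef]; ring
    linarith

/-- Deviating to just above the larger competitor `x k`. -/
lemma dev_right (x : Fin 3 → ℝ) (ρ : ℝ) (i j k : Fin 3)
    (hij : i ≠ j) (hik : i ≠ k) (hjk : j ≠ k)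
    (hx : ∀ l, x l ∈ Set.Icc (0:ℝ) 1) (hord : x j ≤ x k) (hρ : 0 ≤ ρ)
    (H : ∀ t ∈ Set.Icc (0:ℝ) 1,
      hotellingUtility (Function.update x i t) i ≤ ρ * hotellingUtility x i) :
    1 - x k ≤ ρ * hotellingUtility x i := by
  rcases le_or_gt 1 (x k) with h0 | h0
  · exact le_trans (by linarith) (mul_nonneg hρ (utility_nonneg x i))
  · apply le_of_forall_pos_le_add
    intro ε hε
    set δ := min ε (1 - x k) with hδdef
    have hδ0 : 0 < δ := lt_min hε (by linarith)
    have hδk : δ ≤ 1 - x k := min_le_right _ _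
    have hδε : δ ≤ ε := min_le_left _ _
    set t := x k + δ with htdef
    have ht : t ∈ Set.Icc (0:ℝ) 1 := ⟨by have := (hx k).1; simp only [htdef]; linarith,
      by simp only [htdef]; linarith⟩
    have hkey : 1 - (x k + t)/2 ≤ ρ * hotellingUtility x i := by
      have := dev_lower x ρ i j k hij hik hjk H ht (p := (x k + t)/2) (q := 1)
        (by have := (hx k).1; simp only [htdef]; linarith) le_rfl
        (by simp only [htdef]; intro hc; nlinarith [hord])
        (by simp only [htdef]; intro hc; nlinarith [hc])
        (fun z hz => ⟨near_of_ge (v := t) (by simp only [htdef]; linarith)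
            (le_trans (by linarith) hz.1) |>.trans
            (near_of_ge hord (le_trans (by linarith [hz.1]) le_rfl)) |>.trans le_rfl,
          near_of_ge (by simp only [htdef]; linarith) hz.1⟩)
      linarith [this]
    have : 1 - x k = 1 - (x k + t)/2 + δ/2 := by simp only [htdef]; ring
    linarith

/-- Deviating to the midpoint of the two (distinct) competitors. -/
lemma dev_mid (x : Fin 3 → ℝ) (ρ : ℝ) (i j k : Fin 3)
    (hij : i ≠ j) (hik : i ≠ k) (hjk : j ≠ k)
    (hx : ∀ l, x l ∈ Set.Icc (0:ℝ) 1) (hord : x j < x k)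
    (H : ∀ t ∈ Set.Icc (0:ℝ) 1,
      hotellingUtility (Function.update x i t) i ≤ ρ * hotellingUtility x i) :
    (x k - x j)/2 ≤ ρ * hotellingUtility x i := by
  set t := (x j + x k)/2 with htdef
  have hj0 := (hx j).1; have hj1 := (hx j).2
  have hk0 := (hx k).1; have hk1 := (hx k).2
  have ht : t ∈ Set.Icc (0:ℝ) 1 := ⟨by simp only [htdef]; linarith, by simp only [htdef]; linarith⟩
  have := dev_lower x ρ i j k hij hik hjk H ht (p := (x j + t)/2) (q := (t + x k)/2)
    (by simp only [htdef]; linarith) (by simp only [htdef]; linarith)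
    (by simp only [htdef]; intro hc; linarith [hc.symm.le])
    (by simp only [htdef]; intro hc; linarith [hc.le])
    (fun z hz => ⟨near_of_ge (by simp only [htdef]; linarith) hz.1,
      near_of_le (by simp only [htdef]; linarith) hz.2⟩)
  have heq : (t + x k)/2 - (x j + t)/2 = (x k - x j)/2 := by simp only [htdef]; ring
  linarith [this]

lemma arith_generic (a b c ρ u1 u2 u3 : ℝ)
  (hρ : 0 < ρ) (hq : 2*ρ^2 < ρ + 2)
  (h1 : b ≤ ρ * u1) (h2 : 1 - b ≤ ρ * u3) (h3 : a ≤ ρ * u2) (h4 : 1 - c ≤ ρ * u2)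
  (hu1 : u1 ≤ (a+b)/2 - 0) (hu2 : u2 ≤ (b+c)/2 - (a+b)/2) (hu3 : u3 ≤ 1 - (b+c)/2) : False := by
  have m1 := mul_le_mul_of_nonneg_left hu1 hρ.le
  have m2 := mul_le_mul_of_nonneg_left hu2 hρ.le
  have m3 := mul_le_mul_of_nonneg_left hu3 hρ.le
  have P1 : 2*b ≤ ρ*(a+b) := by nlinarith
  have P2 : 2*(1-b) ≤ ρ*(2-b-c) := by nlinarith
  have P34 : (a + 1 - c)*(1+ρ) ≤ ρ := by nlinarith
  have E1 : 2 - ρ ≤ ρ * (a + 1 - c) := by nlinarith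
  nlinarith [mul_le_mul_of_nonneg_left P34 hρ.le,
    mul_le_mul_of_nonneg_right E1 (show (0:ℝ) ≤ 1 + ρ by linarith)]

lemma arith_leftpair (a c ρ u1 u3 : ℝ)
  (hρ : 0 < ρ) (hq : 2*ρ^2 < ρ + 2)
  (g2 : 1 - c ≤ ρ * u1) (g3 : a ≤ ρ * u1) (g4 : 1 - a ≤ ρ * u3)
  (hu1 : u1 ≤ ((a+c)/2 - 0)/2) (hu3 : u3 ≤ 1 - (a+c)/2) : False := by
  have hρ4 : ρ < 4/3 := by nlinarith
  have m1 := mul_le_mul_of_nonneg_left hu1 hρ.le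
  have m3 := mul_le_mul_of_nonneg_left hu3 hρ.le
  have P2 : 4*(1-c) ≤ ρ*(a+c) := by nlinarith
  have P3 : 4*a ≤ ρ*(a+c) := by nlinarith
  have P4 : 2*(1-a) ≤ ρ*(2-a-c) := by nlinarith
  nlinarith [mul_le_mul_of_nonneg_left P2 hρ.le,
    mul_le_mul_of_nonneg_left P3 (show (0:ℝ) ≤ 4 - ρ by linarith)]

lemma arith_rightpair (a c ρ u1 u3 : ℝ)
  (hρ : 0 < ρ) (hq : 2*ρ^2 < ρ + 2)
  (q2 : a ≤ ρ * u3) (q3 : 1 - c ≤ ρ * u3) (q4 : c ≤ ρ * u1)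
  (hu3 : u3 ≤ (1 - (a+c)/2)/2) (hu1 : u1 ≤ (a+c)/2 - 0) : False := by
  have hρ4 : ρ < 4/3 := by nlinarith
  have m1 := mul_le_mul_of_nonneg_left hu1 hρ.le
  have m3 := mul_le_mul_of_nonneg_left hu3 hρ.le
  have P2 : 4*a ≤ ρ*(2-a-c) := by nlinarith
  have P3 : 4*(1-c) ≤ ρ*(2-a-c) := by nlinarith
  have P4 : 2*c ≤ ρ*(a+c) := by nlinarith
  nlinarith [mul_le_mul_of_nonneg_left P2 hρ.le,
    mul_le_mul_of_nonneg_left P3 (show (0:ℝ) ≤ 4 - ρ by linarith)]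

lemma arith_allequal (a ρ u1 : ℝ) (hρ : 0 < ρ) (hq : 2*ρ^2 < ρ + 2)
  (r1 : 1 - a ≤ ρ * u1) (r2 : a ≤ ρ * u1) (hu1 : u1 ≤ 1/3) : False := by
  have m1 := mul_le_mul_of_nonneg_left hu1 hρ.le
  nlinarith

lemma core (x : Fin 3 → ℝ) (ρ : ℝ) (i j k : Fin 3)
    (hij : i ≠ j) (hik : i ≠ k) (hjk : j ≠ k)
    (hx : ∀ l, x l ∈ Set.Icc (0:ℝ) 1)
    (hord1 : x i ≤ x j) (hord2 : x j ≤ x k)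
    (hρ : ρ < (1 + Real.sqrt 17) / 4)
    (H : ∀ l : Fin 3, ∀ t ∈ Set.Icc (0:ℝ) 1,
      hotellingUtility (Function.update x l t) l ≤ ρ * hotellingUtility x l) :
    False := by
  have hi0 := (hx i).1; have hi1 := (hx i).2
  have hj0 := (hx j).1; have hj1 := (hx j).2
  have hk0 := (hx k).1; have hk1 := (hx k).2
  rcases le_or_gt ρ 0 with hρ0 | hρ0
  · -- ρ ≤ 0 : any facility has a deviation with positive guaranteed share
    have hU0 : ρ * hotellingUtility x i ≤ 0 :=
      mul_nonpos_iff.mpr (Or.inr ⟨hρ0, utility_nonneg x i⟩)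
    rcases lt_or_eq_of_le hord2 with hlt | heq
    · have := dev_mid x ρ i j k hij hik hjk hx hlt (H i)
      linarith
    · -- x j = x k =: w
      rcases le_or_gt (1/2 : ℝ) (x j) with hw | hw
      · have := dev_lower x ρ i j k hij hik hjk (H i)
          (t := x j / 2) (p := 0) (q := (x j / 2 + x j)/2)
          ⟨by linarith, by linarith⟩ le_rfl (by linarith)
          (by intro hc; linarith) (by rw [← heq]; intro hc; linarith)
          (fun z hz => by
            have h1 : |z - x j / 2| ≤ |z - x j| := near_of_le (by linarith) hz.2
            exact ⟨h1, by rw [← heq]; exact h1⟩)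
        linarith
      · have := dev_lower x ρ i j k hij hik hjk (H i)
          (t := (x j + 1)/2) (p := (x j + (x j + 1)/2)/2) (q := 1)
          ⟨by linarith, by linarith⟩ (by linarith) le_rfl
          (by intro hc; linarith) (by rw [← heq]; intro hc; linarith)
          (fun z hz => by
            have h1 : |z - (x j + 1)/2| ≤ |z - x j| := near_of_ge (by linarith) hz.1
            exact ⟨h1, by rw [← heq]; exact h1⟩)
        linarith
  · -- 0 < ρ
    have hq : 2*ρ^2 < ρ + 2 := by
      have hs : Real.sqrt 17 ^ 2 = 17 := Real.sq_sqrt (by norm_num)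
      have hs0 : 0 ≤ Real.sqrt 17 := Real.sqrt_nonneg 17
      nlinarith [mul_pos (sub_pos.mpr hρ) (show (0:ℝ) < ρ - (1 - Real.sqrt 17)/4 by nlinarith)]
    rcases lt_or_eq_of_le hord1 with hlt1 | heq1 <;> rcases lt_or_eq_of_le hord2 with hlt2 | heq2
    · -- x i < x j < x k : generic case
      have hik' : x i < x k := hlt1.trans hlt2
      have hu1 : hotellingUtility x i ≤ (x i + x j)/2 - 0 :=
        utility_le x i (by linarith) (fun z hz hall => ⟨hz.1, le_of_near hlt1 (hall j)⟩)
      have hu2 : hotellingUtility x j ≤ (x j + x k)/2 - (x i + x j)/2 :=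
        utility_le x j (by linarith)
          (fun z hz hall => ⟨ge_of_near hlt1 (hall i), le_of_near hlt2 (hall k)⟩)
      have hu3 : hotellingUtility x k ≤ 1 - (x j + x k)/2 :=
        utility_le x k (by linarith) (fun z hz hall => ⟨ge_of_near hlt2 (hall j), hz.2⟩)
      have h1 := dev_left x ρ i j k hij hik hjk hx hord2 hρ0.le (H i)
      have h2 := dev_right x ρ k i j (Ne.symm hik) (Ne.symm hjk) hij hx hord1 hρ0.le (H k)
      have h3 := dev_left x ρ j i k (Ne.symm hij) hjk hik hx (hord1.trans hord2) hρ0.le (H j)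
      have h4 := dev_right x ρ j i k (Ne.symm hij) hjk hik hx (hord1.trans hord2) hρ0.le (H j)
      exact arith_generic (x i) (x j) (x k) ρ _ _ _ hρ0 hq h1 h2 h3 h4 hu1 hu2 hu3
    · -- x i < x j = x k
      have hik' : x i < x k := hlt1.trans_le heq2.le
      have hu1 : hotellingUtility x i ≤ (x i + x k)/2 - 0 :=
        utility_le x i (by linarith) (fun z hz hall => ⟨hz.1, le_of_near hik' (hall k)⟩)
      have hu3 : hotellingUtility x k ≤ (1 - (x i + x k)/2)/2 := by
        have := utility_le_half x k j hjk heq2 (p := (x i + x k)/2) (q := 1) (by linarith)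
          (fun z hz hall => ⟨ge_of_near hik' (hall i), hz.2⟩)
        linarith
      have q2 := dev_left x ρ k i j (Ne.symm hik) (Ne.symm hjk) hij hx hord1 hρ0.le (H k)
      have q3 := dev_right x ρ k i j (Ne.symm hik) (Ne.symm hjk) hij hx hord1 hρ0.le (H k)
      have q4 := dev_left x ρ i j k hij hik hjk hx hord2 hρ0.le (H i)
      rw [heq2] at q4 q3
      exact arith_rightpair (x i) (x k) ρ _ _ hρ0 hq q2 q3 q4 hu3 hu1
    · -- x i = x j < x k
      have hik' : x i < x k := heq1.trans_lt hlt2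
      have hu1 : hotellingUtility x i ≤ ((x i + x k)/2 - 0)/2 :=
        utility_le_half x i j (Ne.symm hij) heq1.symm (by linarith)
          (fun z hz hall => ⟨hz.1, le_of_near hik' (hall k)⟩)
      have hu3 : hotellingUtility x k ≤ 1 - (x i + x k)/2 :=
        utility_le x k (by linarith) (fun z hz hall => ⟨ge_of_near hik' (hall i), hz.2⟩)
      have g2 := dev_right x ρ i j k hij hik hjk hx hord2 hρ0.le (H i)
      have g3 := dev_left x ρ i j k hij hik hjk hx hord2 hρ0.le (H i)
      have g4 := dev_right x ρ k i j (Ne.symm hik) (Ne.symm hjk) hij hx hord1 hρ0.le (H k)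
      rw [← heq1] at g3 g4
      exact arith_leftpair (x i) (x k) ρ _ _ hρ0 hq g2 g3 g4 hu1 hu3
    · -- all equal
      have hu1 : hotellingUtility x i ≤ 1/3 := by
        apply utility_le_third x i
        intro l
        rcases fin3_cover i j k l hij hik hjk with rfl | rfl | rfl
        · rfl
        · exact heq1.symm
        · exact (heq1.trans heq2).symm
      have r1 := dev_right x ρ i j k hij hik hjk hx hord2 hρ0.le (H i)
      have r2 := dev_left x ρ i j k hij hik hjk hx hord2 hρ0.le (H i)
      rw [← heq2, ← heq1] at r1
      rw [← heq1] at r2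
      exact arith_allequal (x i) ρ _ hρ0 hq r1 r2 hu1

theorem stmt_5 (x : Fin 3 → ℝ) (hx : ∀ i, x i ∈ Set.Icc (0:ℝ) 1)
    (ρ : ℝ) (hρ : ρ < (1 + Real.sqrt 17) / 4) :
    ∃ i : Fin 3, ∃ t ∈ Set.Icc (0:ℝ) 1,
      ρ * hotellingUtility x i < hotellingUtility (Function.update x i t) i := by
  by_contra h
  push_neg at h
  rcases le_total (x 0) (x 1) with h01 | h01
  · rcases le_total (x 1) (x 2) with h12 | h12
    · exact core x ρ 0 1 2 (by decide) (by decide) (by decide) hx h01 h12 hρ h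
    · rcases le_total (x 0) (x 2) with h02 | h02
      · exact core x ρ 0 2 1 (by decide) (by decide) (by decide) hx h02 h12 hρ h
      · exact core x ρ 2 0 1 (by decide) (by decide) (by decide) hx h02 h01 hρ h
  · rcases le_total (x 1) (x 2) with h12 | h12
    · rcases le_total (x 0) (x 2) with h02 | h02
      · exact core x ρ 1 0 2 (by decide) (by decide) (by decide) hx h01 h02 hρ h
      · exact core x ρ 1 2 0 (by decide) (by decide) (by decide) hx h12 h02 hρ h
    · exact core x ρ 2 1 0 (by decide) (by decide) (by decide) hx h12 h01 hρ h
end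

section
/- Let α ∈ [0,1] and suppose β₁, β₂, β₃ ∈ ℝ satisfy: α·β₁ = (1−α)(3/8 − β₁) + α(β₂ − β₁); (1−α)(β₂ − 3/8) + α(β₂ − β₁) = (1−α)(5/8 − β₂) + α(β₃ − β₂); and (1−α)(β₃ − 5/8) + α(β₃ − β₂) = (1−α)(7/8 − β₃) + α(1 − β₃). Then 4·β₁ = 1/2 + 2(α² − 2)/((α−1)·α·(4+α) − 4). -/
/-!
The indifference conditions form a linear system in `β₁, β₂, β₃`; eliminating `β₃` and then `β₂`
leaves one linear equation for `β₁` whose coefficient is the cubic `(α - 1) α (4 + α) - 4`,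
which is negative on `[0, 1]`, so the equation can be solved for `β₁`.
-/

lemma cubic_denominator_neg {α : ℝ} (hα0 : 0 ≤ α) (hα1 : α ≤ 1) :
    (α - 1) * α * (4 + α) - 4 < 0 := by
  have : (α - 1) * (α * (4 + α)) ≤ 0 :=
    mul_nonpos_of_nonpos_of_nonneg (by linarith) (by positivity)
  linarith [mul_assoc (α - 1) α (4 + α)]

lemma indifference_eliminate {α β₁ β₂ β₃ : ℝ}
    (h1 : α * β₁ = (1 - α) * (3/8 - β₁) + α * (β₂ - β₁))
    (h2 : (1 - α) * (β₂ - 3/8) + α * (β₂ - β₁)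
        = (1 - α) * (5/8 - β₂) + α * (β₃ - β₂))
    (h3 : (1 - α) * (β₃ - 5/8) + α * (β₃ - β₂)
        = (1 - α) * (7/8 - β₃) + α * (1 - β₃)) :
    ((α - 1) * α * (4 + α) - 4) * (4 * β₁ - 1/2) = 2 * (α^2 - 2) := by
  linear_combination (4 * α^2 - 16) * h1 - 8 * α * h2 - 4 * α^2 * h3

theorem stmt_6 (α β₁ β₂ β₃ : ℝ) (hα0 : 0 ≤ α) (hα1 : α ≤ 1)
    (h1 : α * β₁ = (1 - α) * (3/8 - β₁) + α * (β₂ - β₁))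
    (h2 : (1 - α) * (β₂ - 3/8) + α * (β₂ - β₁)
        = (1 - α) * (5/8 - β₂) + α * (β₃ - β₂))
    (h3 : (1 - α) * (β₃ - 5/8) + α * (β₃ - β₂)
        = (1 - α) * (7/8 - β₃) + α * (1 - β₃)) :
    4 * β₁ = 1/2 + 2 * (α^2 - 2) / ((α - 1) * α * (4 + α) - 4) := by
  have hD := (cubic_denominator_neg hα0 hα1).ne
  rw [← indifference_eliminate h1 h2 h3, mul_div_cancel_left₀ _ hD]
  ring
end

section
/- Let α ∈ [0,1] and suppose β₁, β₂, β₃, β₄ ∈ ℝ satisfy: α·β₁ = (1−α)(3/10 − β₁) + α(β₂ − β₁); (1−α)(β₂ − 3/10) + α(β₂ − β₁) = (1−α)(1/2 − β₂) + α(β₃ − β₂); (1−α)(β₃ − 1/2) + α(β₃ − β₂) = (1−α)(7/10 − β₃) + α(β₄ − β₃); and (1−α)(β₄ − 7/10) + α(β₄ − β₃) = (1−α)(9/10 − β₄) + α(1 − β₄). Then 5·β₁ = (12 + α(4 + α(α(α−2) − 10))) / (8 + α(2+α)(4 + (α−6)·α)). -/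
/-! The four indifference conditions form a tridiagonal linear system in β₁, …, β₄.
Eliminating β₄, β₃, β₂ leaves a single linear equation `5β₁ · D(α) = N(α)`, and on `[0,1]`
the denominator satisfies `D(α) ≥ 8 - α(2 + α) ≥ 5`, so it can be divided out. -/

lemma uniformDeviation_denom_pos {α : ℝ} (hα0 : 0 ≤ α) (hα1 : α ≤ 1) :
    0 < 8 + α * (2 + α) * (4 + (α - 6) * α) := by
  have hp : 0 ≤ α * (2 + α) := by positivity
  have hq : -1 ≤ 4 + (α - 6) * α := by nlinarith
  nlinarith [mul_le_mul_of_nonneg_left hq hp]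

lemma uniformDeviation_denom_mul_eq {α β₁ β₂ β₃ β₄ : ℝ}
    (h1 : α * β₁ = (1 - α) * (3/10 - β₁) + α * (β₂ - β₁))
    (h2 : (1 - α) * (β₂ - 3/10) + α * (β₂ - β₁)
        = (1 - α) * (1/2 - β₂) + α * (β₃ - β₂))
    (h3 : (1 - α) * (β₃ - 1/2) + α * (β₃ - β₂)
        = (1 - α) * (7/10 - β₃) + α * (β₄ - β₃))
    (h4 : (1 - α) * (β₄ - 7/10) + α * (β₄ - β₃)
        = (1 - α) * (9/10 - β₄) + α * (1 - β₄)) :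
    5 * β₁ * (8 + α * (2 + α) * (4 + (α - 6) * α))
      = 12 + α * (4 + α * (α * (α - 2) - 10)) := by
  -- The multipliers are proportional to the first row of the adjugate of the coefficient
  -- matrix, which is what makes β₂, β₃, β₄ cancel.
  linear_combination (5 * (8 - 4 * α ^ 2)) * h1 + (5 * (4 * α - α ^ 3)) * h2
    + (10 * α ^ 2) * h3 + (5 * α ^ 3) * h4

theorem stmt_7 (α β₁ β₂ β₃ β₄ : ℝ) (hα0 : 0 ≤ α) (hα1 : α ≤ 1)
    (h1 : α * β₁ = (1 - α) * (3/10 - β₁) + α * (β₂ - β₁))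
    (h2 : (1 - α) * (β₂ - 3/10) + α * (β₂ - β₁)
        = (1 - α) * (1/2 - β₂) + α * (β₃ - β₂))
    (h3 : (1 - α) * (β₃ - 1/2) + α * (β₃ - β₂)
        = (1 - α) * (7/10 - β₃) + α * (β₄ - β₃))
    (h4 : (1 - α) * (β₄ - 7/10) + α * (β₄ - β₃)
        = (1 - α) * (9/10 - β₄) + α * (1 - β₄)) :
    5 * β₁ = (12 + α * (4 + α * (α * (α - 2) - 10)))
        / (8 + α * (2 + α) * (4 + (α - 6) * α)) := by
  rw [eq_div_iff (uniformDeviation_denom_pos hα0 hα1).ne']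
  exact uniformDeviation_denom_mul_eq h1 h2 h3 h4
end

section
/- Let α ∈ [0,1] and suppose β₁, …, β₅ ∈ ℝ satisfy: α·β₁ = (1−α)(1/4 − β₁) + α(β₂ − β₁); (1−α)(β₂ − 1/4) + α(β₂ − β₁) = (1−α)(5/12 − β₂) + α(β₃ − β₂); (1−α)(β₃ − 5/12) + α(β₃ − β₂) = (1−α)(7/12 − β₃) + α(β₄ − β₃); (1−α)(β₄ − 7/12) + α(β₄ − β₃) = (1−α)(3/4 − β₄) + α(β₅ − β₄); and (1−α)(β₅ − 3/4) + α(β₅ − β₄) = (1−α)(11/12 − β₅) + α(1 − β₅). Then 6·β₁ = 1/2 + (16 − 16α² + 3α⁴)/(16 + α(16 + α(α(α(5+α) − 12) − 20))). -/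
theorem stmt_8 (α β₁ β₂ β₃ β₄ β₅ : ℝ) (hα0 : 0 ≤ α) (hα1 : α ≤ 1)
    (h1 : α * β₁ = (1 - α) * (1/4 - β₁) + α * (β₂ - β₁))
    (h2 : (1 - α) * (β₂ - 1/4) + α * (β₂ - β₁)
        = (1 - α) * (5/12 - β₂) + α * (β₃ - β₂))
    (h3 : (1 - α) * (β₃ - 5/12) + α * (β₃ - β₂)
        = (1 - α) * (7/12 - β₃) + α * (β₄ - β₃))
    (h4 : (1 - α) * (β₄ - 7/12) + α * (β₄ - β₃)
        = (1 - α) * (3/4 - β₄) + α * (β₅ - β₄))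
    (h5 : (1 - α) * (β₅ - 3/4) + α * (β₅ - β₄)
        = (1 - α) * (11/12 - β₅) + α * (1 - β₅)) :
    6 * β₁ = 1/2 + (16 - 16*α^2 + 3*α^4)
        / (16 + α * (16 + α * (α * (α * (5 + α) - 12) - 20))) := by
  have hD : 16 + α * (16 + α * (α * (α * (5 + α) - 12) - 20)) > 0 := by
    nlinarith [sq_nonneg α, sq_nonneg (1 - α), sq_nonneg (α*α), mul_nonneg hα0 hα0,
      mul_nonneg (mul_nonneg hα0 hα0) hα0, sq_nonneg (α*(1-α))]
  have key : (16 - 16*α^2 + 3*α^4)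
      / (16 + α * (16 + α * (α * (α * (5 + α) - 12) - 20))) = 6*β₁ - 1/2 := by
    rw [div_eq_iff (ne_of_gt hD)]
    linear_combination (-96 + 72*α^2 - 6*α^4) * h1 + (-48*α + 24*α^3) * h2
      + (-24*α^2 + 6*α^4) * h3 + (-12*α^3) * h4 + (-6*α^4) * h5
  rw [key]; ring
end

section
/- Let α ∈ [0,1] and suppose β₁, …, β₆ ∈ ℝ satisfy: α·β₁ = (1−α)(3/14 − β₁) + α(β₂ − β₁), and for each i = 2, …, 6: (1−α)(β_i − (2i−1)/14) + α(β_i − β_{i−1}) = (1−α)((2i+1)/14 − β_i) + α(β_{i+1} − β_i), where β₇ := 1. Then 7·β₁ = (α(α(64 + α(16 + α(α(α−3) − 21))) − 16) − 48) / (α(α(48 + α(32 + α((α−6)·α − 18))) − 32) − 32). -/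
theorem stmt_9 (α : ℝ) (β : ℕ → ℝ) (hα0 : 0 ≤ α) (hα1 : α ≤ 1)
    (hβ7 : β 7 = 1)
    (h1 : α * β 1 = (1 - α) * (3/14 - β 1) + α * (β 2 - β 1))
    (hi : ∀ i : ℕ, 2 ≤ i → i ≤ 6 →
      (1 - α) * (β i - (2*(i:ℝ) - 1)/14) + α * (β i - β (i - 1))
        = (1 - α) * ((2*(i:ℝ) + 1)/14 - β i) + α * (β (i + 1) - β i)) :
    7 * β 1 = (α * (α * (64 + α * (16 + α * (α * (α - 3) - 21))) - 16) - 48)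
        / (α * (α * (48 + α * (32 + α * ((α - 6) * α - 18))) - 32) - 32) := by
  have h2 := hi 2 (by norm_num) (by norm_num)
  have h3 := hi 3 (by norm_num) (by norm_num)
  have h4 := hi 4 (by norm_num) (by norm_num)
  have h5 := hi 5 (by norm_num) (by norm_num)
  have h6 := hi 6 (by norm_num) (by norm_num)
  norm_num at h2 h3 h4 h5 h6
  have hD : α * (α * (48 + α * (32 + α * ((α - 6) * α - 18))) - 32) - 32 ≠ 0 := by
    nlinarith [sq_nonneg α, sq_nonneg (α - 1), sq_nonneg (α + 1), sq_nonneg (α * α),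
      sq_nonneg (α * α - α), mul_nonneg hα0 hα0, pow_le_one₀ hα0 hα1 (n := 6),
      pow_le_one₀ hα0 hα1 (n := 5), pow_le_one₀ hα0 hα1 (n := 4)]
  rw [eq_div_iff hD]
  linear_combination (-224 + 224*α^2 - 42*α^4) * h1 + (-112*α + 84*α^3 - 7*α^5) * h2
    + (-56*α^2 + 28*α^4) * h3 + (-28*α^3 + 7*α^5) * h4 + (-14*α^4) * h5
    + (-7*α^5) * h6 + (-7*α^6) * hβ7
end

section
/- Let n ≥ 4 be an integer and α ∈ (0,1). Define recursively K¹ := −α²/4 and Kᵐ := (−α²/4)/(1 + K^{m−1}) for m ≥ 2. Suppose β₁, …, β_{n−1} ∈ ℝ satisfy: α·β₁ = (1−α)(3/(2n) − β₁) + α(β₂ − β₁), and for each i = 2, …, n−1: (1−α)(β_i − (2i−1)/(2n)) + α(β_i − β_{i−1}) = (1−α)((2i+1)/(2n) − β_i) + α(β_{i+1} − β_i), where β_n := 1. Then n·β₁ = (n/(1 + (2/(1+α))·K^{n−2})) · ( ((1−α)/(1+α))·(3/(2n)) + Σ_{k=2}^{n−1} ((1−α)/(1+α))·(2k/n)·Π_{j=n−k}^{n−2}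 (−(2/α)·Kʲ) + (α/(1+α))·Π_{j=1}^{n−2} (−(2/α)·Kʲ) ). -/
/-- The `m`-level generalized continued fraction with all partial numerators
`-α²/4` and all partial denominators `1`:
`contFracK α 1 = -α²/4` and `contFracK α m = (-α²/4)/(1 + contFracK α (m-1))`. -/
noncomputable def contFracK (α : ℝ) : ℕ → ℝ
  | 0 => 0
  | m + 1 => (-α^2 / 4) / (1 + contFracK α m)

lemma contFracK_bounds {α : ℝ} (hα0 : 0 < α) (hα1 : α < 1) :
    ∀ m : ℕ, -(1:ℝ)/2 < contFracK α m ∧ contFracK α m ≤ 0 := by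
  intro m
  induction m with
  | zero => norm_num [contFracK]
  | succ m ih =>
    obtain ⟨hlo, hhi⟩ := ih
    have hpos : (0:ℝ) < 1 + contFracK α m := by linarith
    have hα2 : α^2 < 1 := by nlinarith
    have h2 : contFracK α (m+1) = -((α^2/4) / (1 + contFracK α m)) := by
      rw [contFracK]; ring
    constructor
    · rw [h2]
      have : (α^2/4) / (1 + contFracK α m) < 1/2 := by
        rw [div_lt_iff₀ hpos]; nlinarith
      linarith
    · rw [h2]
      have : 0 ≤ (α^2/4) / (1 + contFracK α m) := by positivity
      linarith

/-- `c_j = -(2/α) K^j`. -/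
noncomputable def cK (α : ℝ) (j : ℕ) : ℝ := -(2/α) * contFracK α j

lemma cK_mul {α : ℝ} (hα0 : 0 < α) (m : ℕ) : α * cK α m = -2 * contFracK α m := by
  unfold cK; field_simp

lemma cK_succ {α : ℝ} (hα0 : 0 < α) (hα1 : α < 1) (m : ℕ) :
    cK α (m+1) * (2 * (1 + contFracK α m)) = α := by
  have h := (contFracK_bounds hα0 hα1 m).1
  have hpos : (0:ℝ) < 1 + contFracK α m := by linarith
  unfold cK
  rw [contFracK]
  field_simp
  ring

/-- Inhomogeneous term accumulator. -/
noncomputable def dd (α : ℝ) (n : ℕ) : ℕ → ℝ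
  | 0 => 1
  | m + 1 => cK α (m+1) * dd α n m
      + (cK α (m+1) / α) * ((1-α) * (2*((n:ℝ)-(m+1))/n))

lemma dd_closed {α : ℝ} (hα0 : 0 < α) (n : ℕ) :
    ∀ m : ℕ, dd α n m =
      (∑ j ∈ Finset.Icc 1 m, (1-α) * (2*((n:ℝ)-(j:ℝ))/n) / α * ∏ l ∈ Finset.Icc j m, cK α l)
        + ∏ l ∈ Finset.Icc 1 m, cK α l := by
  intro m
  induction m with
  | zero => simp [dd]
  | succ m ih =>
    rw [Finset.sum_Icc_succ_top (by omega : 1 ≤ m + 1),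
        Finset.prod_Icc_succ_top (by omega : 1 ≤ m + 1)]
    rw [Finset.sum_congr rfl (fun j hj => by
      rw [Finset.prod_Icc_succ_top (by exact le_trans (Finset.mem_Icc.1 hj).2 (by omega))])]
    have hsingle : ∏ l ∈ Finset.Icc (m+1) (m+1), cK α l = cK α (m+1) := by simp
    rw [hsingle]
    show cK α (m+1) * dd α n m + (cK α (m+1) / α) * ((1-α) * (2*((n:ℝ)-(m+1))/n)) = _
    rw [ih]
    simp only [← mul_assoc]
    rw [← Finset.sum_mul]
    push_cast
    field_simp
    ring

theorem stmt_10 (n : ℕ) (hn : 4 ≤ n) (α : ℝ) (hα0 : 0 < α) (hα1 : α < 1)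
    (β : ℕ → ℝ) (hβn : β n = 1)
    (h1 : α * β 1 = (1 - α) * (3/(2*(n:ℝ)) - β 1) + α * (β 2 - β 1))
    (hi : ∀ i : ℕ, 2 ≤ i → i ≤ n - 1 →
      (1 - α) * (β i - (2*(i:ℝ) - 1)/(2*(n:ℝ))) + α * (β i - β (i - 1))
        = (1 - α) * ((2*(i:ℝ) + 1)/(2*(n:ℝ)) - β i) + α * (β (i + 1) - β i)) :
    (n : ℝ) * β 1 =
      ((n : ℝ) / (1 + (2/(1 + α)) * contFracK α (n - 2))) *
        ( ((1 - α)/(1 + α)) * (3/(2*(n:ℝ)))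
          + ∑ k ∈ Finset.Icc 2 (n - 1),
              ((1 - α)/(1 + α)) * (2*(k:ℝ)/(n:ℝ))
                * ∏ j ∈ Finset.Icc (n - k) (n - 2), (-(2/α) * contFracK α j)
          + (α/(1 + α)) * ∏ j ∈ Finset.Icc 1 (n - 2), (-(2/α) * contFracK α j) ) := by
  have hαne : α ≠ 0 := ne_of_gt hα0
  -- the backward recursion
  have key : ∀ m : ℕ, m ≤ n - 2 → β (n - m) = cK α m * β (n - m - 1) + dd α n m := by
    intro m
    induction m with
    | zero =>
      intro _
      simp [cK, contFracK, dd, hβn]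
    | succ m ihm =>
      intro hm
      have ih := ihm (by omega)
      have h2i : 2 ≤ n - m - 1 := by omega
      have hin : n - m - 1 ≤ n - 1 := by omega
      have E := hi (n - m - 1) h2i hin
      have e1 : n - m - 1 + 1 = n - m := by omega
      have e2 : n - m - 1 - 1 = n - m - 2 := by omega
      have e3 : ((n - m - 1 : ℕ) : ℝ) = (n:ℝ) - (m:ℝ) - 1 := by
        have h : (n - m - 1 : ℕ) = n - (m+1) := by omega
        rw [h, Nat.cast_sub (by omega)]; push_cast; ring
      rw [e1, e2, e3] at E
      have hcm := cK_mul hα0 m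
      have hy : β (n - m - 1) * (2 * (1 + contFracK α m)) =
          α * β (n - m - 2) + α * dd α n m + (1-α) * (2*((n:ℝ)-(m+1))/n) := by
        linear_combination E + α * ih + β (n - m - 1) * hcm
      have hc := cK_succ hα0 hα1 m
      have e4 : n - (m+1) = n - m - 1 := by omega
      have e5 : n - m - 1 - 1 = n - m - 2 := by omega
      rw [e4, e5]
      show β (n - m - 1) = cK α (m+1) * β (n - m - 2)
          + (cK α (m+1) * dd α n m + (cK α (m+1) / α) * ((1-α) * (2*((n:ℝ)-(m+1))/n)))
      linear_combination (norm := (field_simp; ring1)) (cK α (m+1)/α) * hy - (β (n - m - 1)/α) * hc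
  -- specialize to m = n-2
  have hβ2 : β 2 = cK α (n-2) * β 1 + dd α n (n-2) := by
    have h := key (n-2) le_rfl
    rw [show n - (n-2) - 1 = 1 from by omega, show n - (n-2) = 2 from by omega] at h
    exact h
  have hK := (contFracK_bounds hα0 hα1 (n-2)).1
  have hαp : (0:ℝ) < 1 + α := by linarith
  have hE : (0:ℝ) < 1 + α + 2 * contFracK α (n-2) := by linarith
  have hb1 : β 1 * (1 + α + 2 * contFracK α (n-2))
      = (1-α)*(3/(2*(n:ℝ))) + α * dd α n (n-2) := by
    linear_combination h1 + α * hβ2 + β 1 * (cK_mul hα0 (n-2))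
  have hnp : (0:ℝ) < (n:ℝ) := by positivity
  -- fold the goal into cK form
  simp only [show ∀ j:ℕ, -(2/α) * contFracK α j = cK α j from fun _ => rfl]
  -- reindex the sum
  have hsum : (∑ k ∈ Finset.Icc 2 (n - 1),
        ((1 - α)/(1 + α)) * (2*(k:ℝ)/(n:ℝ)) * ∏ j ∈ Finset.Icc (n - k) (n - 2), cK α j)
      = (1/(1+α)) * ∑ j ∈ Finset.Icc 1 (n-2),
          (1-α) * (2*((n:ℝ)-(j:ℝ))/n) * ∏ l ∈ Finset.Icc j (n-2), cK α l := by
    rw [Finset.mul_sum]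
    refine Finset.sum_nbij' (i := fun k => n - k) (j := fun j => n - j) ?_ ?_ ?_ ?_ ?_
    · intro a ha; simp only [Finset.mem_Icc] at ha ⊢; omega
    · intro a ha; simp only [Finset.mem_Icc] at ha ⊢; omega
    · intro a ha; simp only [Finset.mem_Icc] at ha; show n - (n - a) = a; omega
    · intro a ha; simp only [Finset.mem_Icc] at ha; show n - (n - a) = a; omega
    · intro a ha
      simp only [Finset.mem_Icc] at ha
      show ((1 - α)/(1 + α)) * (2*(a:ℝ)/(n:ℝ)) * ∏ j ∈ Finset.Icc (n - a) (n - 2), cK α j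
          = 1/(1+α) * ((1-α) * (2*((n:ℝ)-((n - a : ℕ):ℝ))/n) * ∏ l ∈ Finset.Icc (n - a) (n - 2), cK α l)
      rw [Nat.cast_sub (by omega : a ≤ n)]
      ring
  rw [hsum]
  have hdd : α * dd α n (n-2)
      = (∑ j ∈ Finset.Icc 1 (n-2), (1-α) * (2*((n:ℝ)-(j:ℝ))/n) * ∏ l ∈ Finset.Icc j (n-2), cK α l)
        + α * ∏ l ∈ Finset.Icc 1 (n-2), cK α l := by
    rw [dd_closed hα0 n (n-2), mul_add, Finset.mul_sum]
    congr 1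
    refine Finset.sum_congr rfl fun j hj => ?_
    field_simp
  have hβ1v : β 1 = ((1-α)*(3/(2*(n:ℝ))) + α * dd α n (n-2))/(1 + α + 2 * contFracK α (n-2)) := by
    rw [eq_div_iff (ne_of_gt hE)]; exact hb1
  rw [hβ1v, hdd]
  have hDeq : 1 + (2/(1+α)) * contFracK α (n-2)
      = (1 + α + 2 * contFracK α (n-2))/(1+α) := by
    field_simp
  rw [hDeq]
  field_simp
  ring
end

section
/- Let α ∈ (0,1] and suppose β₁, β₂, β₃ ∈ ℝ satisfy: (1−α)(β₁ − 1/4) + α·β₁ = β₂ − β₁; α(β₂ − β₁) = (1−α)(3/4 − β₂) + α(β₃ − β₂); and α(β₃ − β₂) = α(1 − β₃). Then 4·(β₂ − β₁) = (4 + α − α²)/4. -/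
theorem stmt_11 (α β₁ β₂ β₃ : ℝ) (hα0 : 0 < α) (hα1 : α ≤ 1)
    (h1 : (1 - α) * (β₁ - 1/4) + α * β₁ = β₂ - β₁)
    (h2 : α * (β₂ - β₁) = (1 - α) * (3/4 - β₂) + α * (β₃ - β₂))
    (h3 : α * (β₃ - β₂) = α * (1 - β₃)) :
    4 * (β₂ - β₁) = (4 + α - α^2) / 4 := by
  linear_combination (α - 2) * h1 + 2 * h2 + h3
end

section
/- Let α ∈ (0,1] and suppose β₁, …, β₅ ∈ ℝ satisfy: (1−α)(β₁ − 1/6) + α·β₁ = β₂ − β₁; α(β₂ − β₁) = (1−α)(1/2 − β₂) + α(β₃ − β₂); α(β₃ − β₂) = α(β₄ − β₃); (1−α)(β₄ − 1/2) + α(β₄ − β₃) = (1−α)(5/6 − β₄) + α(β₅ − β₄); and α(β₅ − β₄) = α(1 − β₅). Then 6·(β₂ − β₁) = (α(4 − α(α − 7)) − 16) / (2(α(4 + α) − 8)). -/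
theorem stmt_13 (α β₁ β₂ β₃ β₄ β₅ : ℝ) (hα0 : 0 < α) (hα1 : α ≤ 1)
    (h1 : (1 - α) * (β₁ - 1/6) + α * β₁ = β₂ - β₁)
    (h2 : α * (β₂ - β₁) = (1 - α) * (1/2 - β₂) + α * (β₃ - β₂))
    (h3 : α * (β₃ - β₂) = α * (β₄ - β₃))
    (h4 : (1 - α) * (β₄ - 1/2) + α * (β₄ - β₃)
        = (1 - α) * (5/6 - β₄) + α * (β₅ - β₄))
    (h5 : α * (β₅ - β₄) = α * (1 - β₅)) :
    6 * (β₂ - β₁) = (α * (4 - α * (α - 7)) - 16) / (2 * (α * (4 + α) - 8)) := by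
  have hd : 2 * (α * (4 + α) - 8) ≠ 0 := by nlinarith
  rw [eq_div_iff hd]
  linear_combination (6*α^2 - 48*α + 48) * h1 + (24*α - 48) * h2 + (6*α - 24) * h3
    + (-12*α) * h4 + (-6*α) * h5
end

section
/- Let α ∈ (0,1] and suppose β₁, …, β₇ ∈ ℝ satisfy: (1−α)(β₁ − 1/8) + α·β₁ = β₂ − β₁; α(β₂ − β₁) = (1−α)(3/8 − β₂) + α(β₃ − β₂); α(β₃ − β₂) = α(β₄ − β₃); (1−α)(β₄ − 3/8) + α(β₄ − β₃) = (1−α)(5/8 − β₄) + α(β₅ − β₄); α(β₅ − β₄) = α(β₆ − β₅); (1−α)(β₆ − 5/8) + α(β₆ − β₅) = (1−α)(7/8 − β₆) + α(β₇ − β₆); and α(β₇ − β₆) = α(1 − β₇). Then 8·(β₂ − β₁) = (64 − α(48 + α(24 + (α−17)·α))) / (4(16 + α(α − 16 + α²))). -/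
theorem stmt_15 (α β₁ β₂ β₃ β₄ β₅ β₆ β₇ : ℝ) (hα0 : 0 < α) (hα1 : α ≤ 1)
    (h1 : (1 - α) * (β₁ - 1/8) + α * β₁ = β₂ - β₁)
    (h2 : α * (β₂ - β₁) = (1 - α) * (3/8 - β₂) + α * (β₃ - β₂))
    (h3 : α * (β₃ - β₂) = α * (β₄ - β₃))
    (h4 : (1 - α) * (β₄ - 3/8) + α * (β₄ - β₃)
        = (1 - α) * (5/8 - β₄) + α * (β₅ - β₄))
    (h5 : α * (β₅ - β₄) = α * (β₆ - β₅))
    (h6 : (1 - α) * (β₆ - 5/8) + α * (β₆ - β₅)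
        = (1 - α) * (7/8 - β₆) + α * (β₇ - β₆))
    (h7 : α * (β₇ - β₆) = α * (1 - β₇)) :
    8 * (β₂ - β₁) = (64 - α * (48 + α * (24 + (α - 17) * α)))
        / (4 * (16 + α * (α - 16 + α^2))) := by
  have hd : 4 * (16 + α * (α - 16 + α^2)) ≠ 0 := by nlinarith [sq_nonneg α, pow_pos hα0 3]
  rw [eq_div_iff hd]
  linear_combination (-256 + 384*α - 144*α^2 + 8*α^3) * h1
    + (256 - 256*α + 48*α^2) * h2 + (128 - 96*α + 8*α^2) * h3
    + (64*α - 32*α^2) * h4 + (32*α - 8*α^2) * h5 + (16*α^2) * h6 + (8*α^2) * h7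
end
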